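/- arXiv:1905.11243 — 2 statements merged into one kernel-verified Lean document; each statement's English description precedes it below -/
import Mathlib

section
/- Let L be a solvable Leibniz A-algebra. Then L splits over each term in its derived series: for every i ≥ 0 there is a subalgebra B of L with L = L^(i) ∔ B (vector space direct sum). Moreover, for each i ≥ 0 the Cartan subalgebras of L^(i)/L^(i+2) are precisely the subalgebras complementary to L^(i+1)/L^(i+2) (i.e. the subalgebras C/L^(i+2) with L^(i)/L^(i+2) = L^(i+1)/L^(i+2) ∔ C/L^(i+2)). -/
/-- A (right) Leibniz algebra structure on an `F`-vector space `L`: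
a bilinear bracket satisfying `[x,[y,z]] = [[x,y],z] - [[x,z],y]`. -/
structure LeibnizAlg (F : Type*) (L : Type*) [Field F] [AddCommGroup L] [Module F L] where
  bracket : L →ₗ[F] L →ₗ[F] L
  leibniz : ∀ x y z : L,
    bracket x (bracket y z) = bracket (bracket x y) z - bracket (bracket x z) y

namespace LeibnizAlg

variable {F : Type*} {L : Type*} [Field F] [AddCommGroup L] [Module F L]

/-- The product `[M, N]` of two subspaces: the span of all brackets `[m, n]`. -/
def prod (A : LeibnizAlg F L) (M N : Submodule F L) : Submodule F L :=
  Submodule.span F {z : L | ∃ m ∈ M, ∃ n ∈ N, z = A.bracket m n}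

/-- A subalgebra: a subspace closed under the product. -/
def IsSubalgebra (A : LeibnizAlg F L) (S : Submodule F L) : Prop :=
  A.prod S S ≤ S

/-- A (two-sided) ideal: `[I, L] ⊆ I` and `[L, I] ⊆ I`. -/
def IsIdeal (A : LeibnizAlg F L) (I : Submodule F L) : Prop :=
  A.prod I ⊤ ≤ I ∧ A.prod ⊤ I ≤ I

/-- Lower central series of a subspace `U`: `lcs U 0 = U = U¹`,
`lcs U k = U^(k+1)`, i.e. `lcs U (k+1) = [lcs U k, U]`. -/
def lcs (A : LeibnizAlg F L) (U : Submodule F L) : ℕ → Submodule F L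
  | 0 => U
  | k + 1 => A.prod (lcs A U k) U

/-- `U` is nilpotent: `U^(n+1) = 0` for some `n`. -/
def IsNilpotentSub (A : LeibnizAlg F L) (U : Submodule F L) : Prop :=
  ∃ n : ℕ, A.lcs U n = ⊥

/-- `U` is abelian: `[U, U] = 0`. -/
def IsAbelian (A : LeibnizAlg F L) (U : Submodule F L) : Prop :=
  A.prod U U = ⊥

/-- An `A`-algebra: every nilpotent subalgebra is abelian. -/
def IsAAlgebra (A : LeibnizAlg F L) : Prop :=
  ∀ U : Submodule F L, A.IsSubalgebra U → A.IsNilpotentSub U → A.IsAbelian U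

/-- Derived series: `derSeries 0 = L`, `derSeries (k+1) = [derSeries k, derSeries k]`. -/
def derSeries (A : LeibnizAlg F L) : ℕ → Submodule F L
  | 0 => ⊤
  | k + 1 => A.prod (derSeries A k) (derSeries A k)

/-- `L` is solvable: some term of the derived series vanishes. -/
def IsSolvable (A : LeibnizAlg F L) : Prop :=
  ∃ n : ℕ, A.derSeries n = ⊥

/-- The centralizer `Z_L(U)` of a subspace `U`. -/
def centralizer (A : LeibnizAlg F L) (U : Submodule F L) : Submodule F L where
  carrier := {x : L | ∀ u ∈ U, A.bracket x u = 0 ∧ A.bracket u x = 0}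
  add_mem' := by
    intro a b ha hb u hu
    refine ⟨?_, ?_⟩
    · rw [map_add, LinearMap.add_apply, (ha u hu).1, (hb u hu).1, add_zero]
    · rw [map_add, (ha u hu).2, (hb u hu).2, add_zero]
  zero_mem' := by
    intro u hu
    refine ⟨?_, ?_⟩
    · rw [map_zero, LinearMap.zero_apply]
    · rw [map_zero]
  smul_mem' := by
    intro c a ha u hu
    refine ⟨?_, ?_⟩
    · rw [map_smul, LinearMap.smul_apply, (ha u hu).1, smul_zero]
    · rw [map_smul, (ha u hu).2, smul_zero]

/-- The centre of the subalgebra `M`: elements of `M` centralizing `M`. -/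
def centerOf (A : LeibnizAlg F L) (M : Submodule F L) : Submodule F L :=
  M ⊓ A.centralizer M

/-- `N` is the nilradical: the largest nilpotent ideal. -/
def IsNilradical (A : LeibnizAlg F L) (N : Submodule F L) : Prop :=
  A.IsIdeal N ∧ A.IsNilpotentSub N ∧
    ∀ I : Submodule F L, A.IsIdeal I → A.IsNilpotentSub I → I ≤ N

/-- A minimal ideal: a nonzero ideal containing no ideal other than `0` and itself. -/
def IsMinimalIdeal (A : LeibnizAlg F L) (I : Submodule F L) : Prop :=
  A.IsIdeal I ∧ I ≠ ⊥ ∧ ∀ J : Submodule F L, A.IsIdeal J → J ≤ I → J = ⊥ ∨ J = I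

/-- A maximal subalgebra. -/
def IsMaximalSubalgebra (A : LeibnizAlg F L) (M : Submodule F L) : Prop :=
  A.IsSubalgebra M ∧ M ≠ ⊤ ∧
    ∀ S : Submodule F L, A.IsSubalgebra S → M ≤ S → S = M ∨ S = ⊤

/-- `L` is φ-free: every ideal contained in all maximal subalgebras is zero. -/
def IsPhiFree (A : LeibnizAlg F L) : Prop :=
  ∀ I : Submodule F L, A.IsIdeal I →
    (∀ M : Submodule F L, A.IsMaximalSubalgebra M → I ≤ M) → I = ⊥

/-- `Asoc L`: the sum of the abelian minimal ideals. -/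
def asoc (A : LeibnizAlg F L) : Submodule F L :=
  sSup {I : Submodule F L | A.IsMinimalIdeal I ∧ A.IsAbelian I}

/-- A Cartan subalgebra: a nilpotent, self-normalizing subalgebra. -/
def IsCartan (A : LeibnizAlg F L) (C : Submodule F L) : Prop :=
  A.IsSubalgebra C ∧ A.IsNilpotentSub C ∧
    ∀ x : L, (∀ c ∈ C, A.bracket x c ∈ C ∧ A.bracket c x ∈ C) → x ∈ C

/-- A maximal nilpotent subalgebra. -/
def IsMaxNilpotentSubalgebra (A : LeibnizAlg F L) (U : Submodule F L) : Prop :=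
  A.IsSubalgebra U ∧ A.IsNilpotentSub U ∧
    ∀ V : Submodule F L, A.IsSubalgebra V → A.IsNilpotentSub V → U ≤ V → V = U

end LeibnizAlg

/-!
Right multiplications `x ↦ [x, c]` are derivations, and for `c` in an abelian subalgebra `C`
they commute. So the Fitting decomposition of a single one, together with Engel's lemma for
commuting nilpotent operators, allows induction on dimension. For a metabelian subalgebra `M`
with `M' = [M, M]` this gives: a subalgebra supplementing `M'` of minimal dimension is a
complement; an abelian `C` with `C + M' = M` fixes no nonzero vector of `M'`, because `C` and the
part of `M'` on which all `x ↦ [x, c]` are nilpotent span a nilpotent, hence abelian,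
subalgebra; and an abelian self-normalizing `C` supplements `M'`. Hence the Cartan subalgebras
of `M` are the complements of `M'`. If `K` is the last nonzero term of the derived series of
`S`, then `H¹(C, K) = 0` for a complement `C` of `K` in the preceding term, which makes the
normalizer of `C` in `S` a complement of `K`; induction on the derived length splits `S` over
every term. The quotient `L / L⁽ⁱ⁺²⁾` is modelled by a subalgebra complement of `L⁽ⁱ⁺²⁾`.
-/

open Module Submodule

section CommutingNilpotent

variable {R M : Type*} [Ring R] [AddCommGroup M] [Module R M]

theorem Submodule.iterate_iSup_map_le {ι : Type*} (s : Finset ι) (f : ι → Module.End R M)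
    {W : Submodule R M} (hW : ∀ i ∈ s, W.map (f i) ≤ W) (m : ℕ) :
    (fun W => ⨆ i ∈ s, W.map (f i))^[m] W ≤ W := by
  induction m with
  | zero => exact le_rfl
  | succ m ih =>
    rw [Function.iterate_succ_apply']
    exact iSup₂_le fun i hi => (map_mono ih).trans (hW i hi)

/-- Modulo `f a (W)`, the operators indexed by `insert a s` act on `W` as those indexed by `s`. -/
theorem Submodule.iterate_iSup_map_insert_le {ι : Type*} [DecidableEq ι] (s : Finset ι)
    (f : ι → Module.End R M) (a : ι) {W : Submodule R M}
    (hW : ∀ i ∈ insert a s, W.map (f i) ≤ W)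
    (hW' : ∀ i ∈ insert a s, (W.map (f a)).map (f i) ≤ W.map (f a)) (j : ℕ) :
    (fun W => ⨆ i ∈ insert a s, W.map (f i))^[j] W ≤
      W.map (f a) ⊔ (fun W => ⨆ i ∈ s, W.map (f i))^[j] W := by
  induction j with
  | zero =>
    rw [Function.iterate_zero_apply, Function.iterate_zero_apply]
    exact le_sup_right
  | succ j ih =>
    have hX := iterate_iSup_map_le s f (fun i hi => hW i (Finset.mem_insert_of_mem hi)) j
    rw [Function.iterate_succ_apply', Function.iterate_succ_apply', Finset.iSup_insert]
    refine sup_le ((map_mono ih).trans ?_) (iSup₂_le fun i hi => (map_mono ih).trans ?_)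
    · rw [map_sup]
      exact sup_le (le_sup_of_le_left (hW' a (Finset.mem_insert_self a s)))
        (le_sup_of_le_left (map_mono hX))
    · rw [map_sup]
      exact sup_le_sup (hW' i (Finset.mem_insert_of_mem hi)) (le_iSup₂_of_le i hi le_rfl)

theorem Submodule.exists_iterate_iSup_map_eq_bot {ι : Type*} (s : Finset ι)
    (f : ι → Module.End R M) (D : Submodule R M) (hD : ∀ i ∈ s, D.map (f i) ≤ D)
    (hcomm : ∀ i ∈ s, ∀ j ∈ s, ∀ d ∈ D, f i (f j d) = f j (f i d))
    (hnil : ∀ i ∈ s, ∃ k, D.map (f i ^ k) = ⊥) :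
    ∃ m, (fun W => ⨆ i ∈ s, W.map (f i))^[m] D = ⊥ := by
  classical
  induction s using Finset.induction_on generalizing D with
  | empty => exact ⟨1, by simp⟩
  | insert a s ha ih =>
    obtain ⟨k, hk⟩ := hnil a (Finset.mem_insert_self a s)
    -- induction on the nilpotency index of `f a`, over the invariant subspaces of `D`
    suffices key : ∀ k, ∀ W ≤ D, (∀ i ∈ insert a s, W.map (f i) ≤ W) →
        W.map (f a ^ k) = ⊥ → ∃ m, (fun W => ⨆ i ∈ insert a s, W.map (f i))^[m] W = ⊥ from
      key k D le_rfl hD hk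
    intro k
    induction k with
    | zero => intro W _ _ hW; exact ⟨0, by simpa [Module.End.one_eq_id] using hW⟩
    | succ k ihk =>
      intro W hWD hWinv hWk
      have hW'inv : ∀ i ∈ insert a s, (W.map (f a)).map (f i) ≤ W.map (f a) := by
        rintro i hi _ ⟨_, ⟨w, hw, rfl⟩, rfl⟩
        rw [hcomm i hi a (Finset.mem_insert_self a s) w (hWD hw)]
        exact mem_map_of_mem (hWinv i hi (mem_map_of_mem hw))
      obtain ⟨m₁, hm₁⟩ := ihk (W.map (f a)) ((hWinv a (Finset.mem_insert_self a s)).trans hWD)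
        hW'inv (by rw [← map_comp, ← Module.End.mul_eq_comp, ← pow_succ, hWk])
      obtain ⟨m₂, hm₂⟩ := ih W (fun i hi => hWinv i (Finset.mem_insert_of_mem hi))
        (fun i hi j hj d hd => hcomm i (Finset.mem_insert_of_mem hi) j
          (Finset.mem_insert_of_mem hj) d (hWD hd))
        (fun i hi => (hnil i (Finset.mem_insert_of_mem hi)).imp fun k hk =>
          eq_bot_iff.2 ((map_mono hWD).trans hk.le))
      have h := iterate_iSup_map_insert_le s f a hWinv hW'inv m₂
      rw [hm₂, sup_bot_eq] at h
      refine ⟨m₁ + m₂, eq_bot_iff.2 ?_⟩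
      rw [Function.iterate_add_apply, ← hm₁]
      have hmono : Monotone fun W : Submodule R M => ⨆ i ∈ insert a s, W.map (f i) :=
        fun _ _ h => iSup₂_mono fun _ _ => map_mono h
      exact hmono.iterate m₁ h

end CommutingNilpotent

section Invariance

variable {R M : Type*} [Ring R] [AddCommGroup M] [Module R M]

theorem Submodule.pow_apply_mem {f : Module.End R M} {W : Submodule R M}
    (hW : ∀ x ∈ W, f x ∈ W) (k : ℕ) {x : M} (hx : x ∈ W) : (f ^ k) x ∈ W := by
  induction k with
  | zero => exact hx
  | succ k ih => rw [pow_succ', Module.End.mul_apply]; exact hW _ ih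

theorem Submodule.apply_mem_inf_ker_pow {f g : Module.End R M} (hfg : Commute f g)
    {W : Submodule R M} (hW : ∀ x ∈ W, g x ∈ W) (n : ℕ) :
    ∀ x ∈ W ⊓ LinearMap.ker (f ^ n), g x ∈ W ⊓ LinearMap.ker (f ^ n) := by
  intro x hx
  obtain ⟨hxW, hx⟩ := mem_inf.1 hx
  refine mem_inf.2 ⟨hW x hxW, ?_⟩
  rw [LinearMap.mem_ker, ← Module.End.mul_apply, (hfg.pow_left n).eq, Module.End.mul_apply,
    LinearMap.mem_ker.1 hx, map_zero]

theorem Submodule.apply_mem_map_pow {f g : Module.End R M} (hfg : Commute f g)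
    {W : Submodule R M} (hW : ∀ x ∈ W, g x ∈ W) (n : ℕ) :
    ∀ x ∈ W.map (f ^ n), g x ∈ W.map (f ^ n) := by
  rintro _ ⟨x, hx, rfl⟩
  rw [← Module.End.mul_apply, ← (hfg.pow_left n).eq, Module.End.mul_apply]
  exact mem_map_of_mem (hW x hx)

end Invariance

section Fitting

variable {K V : Type*} [Field K] [AddCommGroup V] [Module K V] [FiniteDimensional K V]

theorem Module.End.pow_apply_eq_zero_of_le {f : Module.End K V} {m n : ℕ}
    (hn : finrank K V ≤ n) (hm : finrank K V ≤ m) {x : V} (hx : (f ^ m) x = 0) :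
    (f ^ n) x = 0 := by
  rw [← LinearMap.mem_ker, Module.End.ker_pow_eq_ker_pow_finrank_of_le hn,
    ← Module.End.ker_pow_eq_ker_pow_finrank_of_le hm]
  exact hx

theorem Submodule.disjoint_inf_ker_pow_map_pow (f : Module.End K V) (W : Submodule K V) {n : ℕ}
    (hn : finrank K V ≤ n) : Disjoint (W ⊓ LinearMap.ker (f ^ n)) (W.map (f ^ n)) := by
  rw [disjoint_iff, eq_bot_iff]
  rintro _ ⟨hx, y, -, rfl⟩
  have hx := LinearMap.mem_ker.1 (mem_inf.1 hx).2
  rw [← Module.End.mul_apply, ← pow_add] at hx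
  exact Module.End.pow_apply_eq_zero_of_le hn (hn.trans (Nat.le_add_left n n)) hx

theorem Submodule.inf_ker_pow_sup_map_pow (f : Module.End K V) {W : Submodule K V}
    (hW : ∀ x ∈ W, f x ∈ W) {n : ℕ} (hn : finrank K V ≤ n) :
    W ⊓ LinearMap.ker (f ^ n) ⊔ W.map (f ^ n) = W := by
  refine le_antisymm (sup_le inf_le_left
    (map_le_iff_le_comap.2 fun x hx => pow_apply_mem hW n hx)) fun x hx => ?_
  set g := f.restrict hW
  obtain ⟨N, hNcompl, hnN⟩ :=
    (g.eventually_isCompl_ker_pow_range_pow.and (Filter.eventually_ge_atTop n)).exists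
  obtain ⟨a, ha, b, ⟨y, rfl⟩, hab⟩ :=
    mem_sup.1 (hNcompl.codisjoint.eq_top ▸ mem_top : (⟨x, hx⟩ : W) ∈ _)
  have hcoe : ∀ (k : ℕ) (z : W), ((g ^ k) z : V) = (f ^ k) z := fun k z => by
    rw [Module.End.pow_restrict, LinearMap.restrict_apply]
  have hx : x = a + (f ^ N) y := by rw [← hcoe, ← coe_add, hab]
  rw [hx]
  refine add_mem_sup (mem_inf.2 ⟨a.2, ?_⟩) ⟨(f ^ (N - n)) y, pow_apply_mem hW _ y.2, ?_⟩
  · rw [LinearMap.mem_ker] at ha ⊢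
    refine Module.End.pow_apply_eq_zero_of_le hn (hn.trans hnN) ?_
    rw [← hcoe, ha, ZeroMemClass.coe_zero]
  · rw [← Module.End.mul_apply, ← pow_add, Nat.add_sub_cancel' hnN]

theorem Submodule.finrank_inf_ker_pow_lt {f : Module.End K V} {W : Submodule K V} {n : ℕ}
    (h : W.map (f ^ n) ≠ ⊥) : finrank K ↥(W ⊓ LinearMap.ker (f ^ n)) < finrank K W :=
  finrank_lt_finrank_of_lt <| inf_le_left.lt_of_ne fun heq => h <| eq_bot_iff.2 <| by
    rintro _ ⟨x, hx, rfl⟩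
    rw [← heq] at hx
    exact (mem_bot K).2 (mem_inf.1 hx).2

end Fitting

section ModularLattice

variable {α : Type*} [Lattice α] [BoundedOrder α] [IsModularLattice α] {J B X Y Z : α}

theorem IsCompl.inf_sup_eq_of_le (hJB : IsCompl J B) (hJX : J ≤ X) : X ⊓ B ⊔ J = X := by
  rw [inf_sup_assoc_of_le _ hJX, sup_comm, hJB.sup_eq_top, inf_top_eq]

theorem IsCompl.inf_le_of_le_sup (hJB : IsCompl J B) (hY : Y ≤ B) (h : X ≤ Y ⊔ J) :
    X ⊓ B ≤ Y :=
  calc X ⊓ B ≤ (Y ⊔ J) ⊓ B := inf_le_inf_right B h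
    _ = Y := by rw [sup_inf_assoc_of_le J hY, hJB.inf_eq_bot, sup_bot_eq]

theorem IsCompl.inf_eq_iff (hJB : IsCompl J B) (hJX : J ≤ X) (hJY : J ≤ Y) :
    X ⊓ Y = J ↔ X ⊓ B ⊓ (Y ⊓ B) = ⊥ := by
  rw [← inf_inf_distrib_right]
  refine ⟨fun h => h ▸ hJB.inf_eq_bot, fun h => ?_⟩
  rw [← hJB.inf_sup_eq_of_le (le_inf hJX hJY), h, bot_sup_eq]

theorem IsCompl.sup_eq_iff (hJB : IsCompl J B) (hJX : J ≤ X) (hJY : J ≤ Y) (hJZ : J ≤ Z) :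
    X ⊔ Y = Z ↔ X ⊓ B ⊔ Y ⊓ B = Z ⊓ B := by
  have hXY : X ⊔ Y = X ⊓ B ⊔ Y ⊓ B ⊔ J := by
    conv_lhs => rw [← hJB.inf_sup_eq_of_le hJX, ← hJB.inf_sup_eq_of_le hJY]
    rw [sup_sup_sup_comm, sup_idem]
  refine ⟨fun h => le_antisymm (sup_le (inf_le_inf_right B (h ▸ le_sup_left))
    (inf_le_inf_right B (h ▸ le_sup_right))) (hJB.inf_le_of_le_sup
      (sup_le inf_le_right inf_le_right) (h ▸ hXY.le)), fun h => ?_⟩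
  rw [hXY, h, hJB.inf_sup_eq_of_le hJZ]

theorem exists_lt_sup_eq [ComplementedLattice α] {C D : α} (hDC : D ≤ C) (hD : D ≠ ⊥) :
    ∃ C₁ < C, C₁ ⊔ D = C := by
  obtain ⟨Q, hQ⟩ := exists_isCompl D
  refine ⟨C ⊓ Q, inf_le_left.lt_of_ne fun h => hD (eq_bot_iff.2 ?_), ?_⟩
  · exact (le_inf le_rfl (hDC.trans h.ge)).trans
      ((inf_le_inf_left D inf_le_right).trans hQ.inf_eq_bot.le)
  · rw [sup_comm, inf_comm, ← sup_inf_assoc_of_le Q hDC, hQ.sup_eq_top, top_inf_eq]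

end ModularLattice

namespace LeibnizAlg

variable {F L : Type*} [Field F] [AddCommGroup L] [Module F L] (A : LeibnizAlg F L)

def IsIdealIn (S I : Submodule F L) : Prop :=
  I ≤ S ∧ A.prod I S ≤ I ∧ A.prod S I ≤ I

def rightMul (c : L) : Module.End F L :=
  A.bracket.flip c

@[simp]
theorem rightMul_apply (c x : L) : A.rightMul c x = A.bracket x c :=
  rfl

section Product

variable {A}

theorem mem_prod {U V : Submodule F L} {x y : L} (hx : x ∈ U) (hy : y ∈ V) :
    A.bracket x y ∈ A.prod U V :=
  subset_span ⟨x, hx, y, hy, rfl⟩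

theorem prod_le_iff {U V W : Submodule F L} :
    A.prod U V ≤ W ↔ ∀ x ∈ U, ∀ y ∈ V, A.bracket x y ∈ W := by
  refine ⟨fun h x hx y hy => h (mem_prod hx hy), fun h => span_le.2 ?_⟩
  rintro _ ⟨x, hx, y, hy, rfl⟩
  exact h x hx y hy

theorem prod_mono {U U' V V' : Submodule F L} (hU : U ≤ U') (hV : V ≤ V') :
    A.prod U V ≤ A.prod U' V' :=
  prod_le_iff.2 fun _ hx _ hy => mem_prod (hU hx) (hV hy)

theorem prod_sup_left (U U' V : Submodule F L) :
    A.prod (U ⊔ U') V = A.prod U V ⊔ A.prod U' V := by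
  refine le_antisymm (prod_le_iff.2 fun x hx y hy => ?_)
    (sup_le (prod_mono le_sup_left le_rfl) (prod_mono le_sup_right le_rfl))
  obtain ⟨u, hu, u', hu', rfl⟩ := mem_sup.1 hx
  rw [map_add, LinearMap.add_apply]
  exact add_mem_sup (mem_prod hu hy) (mem_prod hu' hy)

theorem prod_sup_right (U V V' : Submodule F L) :
    A.prod U (V ⊔ V') = A.prod U V ⊔ A.prod U V' := by
  refine le_antisymm (prod_le_iff.2 fun x hx y hy => ?_)
    (sup_le (prod_mono le_rfl le_sup_left) (prod_mono le_rfl le_sup_right))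
  obtain ⟨v, hv, v', hv', rfl⟩ := mem_sup.1 hy
  rw [map_add]
  exact add_mem_sup (mem_prod hx hv) (mem_prod hx hv')

theorem IsAbelian.bracket_eq_zero {U : Submodule F L} (hU : A.IsAbelian U) {x y : L}
    (hx : x ∈ U) (hy : y ∈ U) : A.bracket x y = 0 := by
  have h := mem_prod (A := A) hx hy
  rwa [show A.prod U U = ⊥ from hU, mem_bot] at h

theorem IsAbelian.prod_le {U : Submodule F L} (hU : A.IsAbelian U) (W : Submodule F L) :
    A.prod U U ≤ W :=
  (show A.prod U U = ⊥ from hU).le.trans bot_le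

theorem IsSubalgebra.inf {S T : Submodule F L} (hS : A.IsSubalgebra S) (hT : A.IsSubalgebra T) :
    A.IsSubalgebra (S ⊓ T) :=
  le_inf ((prod_mono inf_le_left inf_le_left).trans hS)
    ((prod_mono inf_le_right inf_le_right).trans hT)

theorem IsIdealIn.isSubalgebra {S I : Submodule F L} (hI : A.IsIdealIn S I) :
    A.IsSubalgebra I :=
  (prod_mono le_rfl hI.1).trans hI.2.1

end Product

section Identities

variable {A}

theorem bracket_bracket_right (x y c : L) :
    A.bracket (A.bracket x y) c = A.bracket (A.bracket x c) y + A.bracket x (A.bracket y c) := by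
  rw [A.leibniz]
  abel

theorem bracket_bracket_comm {c c' : L} (h : A.bracket c c' = 0) (x : L) :
    A.bracket (A.bracket x c) c' = A.bracket (A.bracket x c') c := by
  have := A.leibniz x c c'
  rwa [h, map_zero, eq_comm, sub_eq_zero] at this

theorem bracket_bracket_left_comm {c c' : L} (h : A.bracket c c' = 0) (x : L) :
    A.bracket (A.bracket c x) c' = A.bracket c (A.bracket x c') := by
  rw [bracket_bracket_right, h, map_zero, LinearMap.zero_apply, zero_add]

theorem commute_rightMul {c c' : L} (h : A.bracket c c' = 0) :
    Commute (A.rightMul c) (A.rightMul c') :=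
  LinearMap.ext fun x => (bracket_bracket_comm h x).symm

theorem commute_rightMul_bracket {c c' : L} (h : A.bracket c c' = 0) :
    Commute (A.rightMul c') (A.bracket c) :=
  LinearMap.ext fun x => bracket_bracket_left_comm h x

theorem rightMul_pow_succ_apply_eq_zero {c x : L} (h : A.bracket x c = 0) (k : ℕ) :
    (A.rightMul c ^ (k + 1)) x = 0 := by
  rw [pow_succ, Module.End.mul_apply, rightMul_apply, h, map_zero]

end Identities

section LowerCentralSeries

variable {A}

theorem lcs_mono {U V : Submodule F L} (h : U ≤ V) (n : ℕ) : A.lcs U n ≤ A.lcs V n := by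
  induction n with
  | zero => exact h
  | succ n ih => exact prod_mono ih h

theorem lcs_le {U : Submodule F L} (hU : A.IsSubalgebra U) (n : ℕ) : A.lcs U n ≤ U := by
  induction n with
  | zero => exact le_rfl
  | succ n ih => exact (prod_mono ih le_rfl).trans hU

theorem lcs_succ_eq_iterate (U : Submodule F L) (n : ℕ) :
    A.lcs U (n + 1) = (fun W => A.prod W U)^[n] (A.prod U U) := by
  induction n with
  | zero => rfl
  | succ n ih => rw [Function.iterate_succ_apply', ← ih]; rfl

end LowerCentralSeries

section Engel

variable {A}

theorem prod_span_eq_iSup (W : Submodule F L) (s : Set L) :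
    A.prod W (span F s) = ⨆ c ∈ s, W.map (A.rightMul c) := by
  refine le_antisymm (prod_le_iff.2 fun x hx y hy => ?_)
    (iSup₂_le fun c hc => ?_)
  · refine (span_le.2 fun c hc => ?_ : span F s ≤ (⨆ c ∈ s, W.map (A.rightMul c)).comap
      (A.bracket x)) hy
    exact le_iSup₂ (f := fun c _ => W.map (A.rightMul c)) c hc (mem_map_of_mem hx)
  · rintro _ ⟨w, hw, rfl⟩
    exact mem_prod hw (subset_span hc)

theorem exists_iterate_prod_eq_bot [FiniteDimensional F L] {C D : Submodule F L}
    (hDC : A.prod D C ≤ D)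
    (hcomm : ∀ c ∈ C, ∀ c' ∈ C, ∀ d ∈ D,
      A.bracket (A.bracket d c) c' = A.bracket (A.bracket d c') c)
    (hnil : ∀ c ∈ C, ∃ k, D.map (A.rightMul c ^ k) = ⊥) :
    ∃ m, (fun W => A.prod W C)^[m] D = ⊥ := by
  obtain ⟨s, rfl⟩ := IsNoetherian.noetherian C
  simp_rw [prod_span_eq_iSup, Finset.mem_coe]
  refine exists_iterate_iSup_map_eq_bot s A.rightMul D
    (fun c hc => ?_) (fun c hc c' hc' d hd => ?_) (fun c hc => hnil c (subset_span hc))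
  · rintro _ ⟨d, hd, rfl⟩
    exact hDC (mem_prod hd (subset_span hc))
  · exact hcomm c' (subset_span hc') c (subset_span hc) d hd

theorem iterate_prod_le_self {C W : Submodule F L} (hW : A.prod W C ≤ W) (m : ℕ) :
    (fun W => A.prod W C)^[m] W ≤ W := by
  induction m with
  | zero => exact le_rfl
  | succ m ih => rw [Function.iterate_succ_apply']; exact (prod_mono ih le_rfl).trans hW

theorem exists_notMem_forall_bracket_mem {C U W : Submodule F L} (hW : A.prod W C ≤ W)
    {m : ℕ} (hm : (fun W => A.prod W C)^[m] W ≤ U) (hWU : ¬ W ≤ U) :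
    ∃ x ∈ W, x ∉ U ∧ ∀ c ∈ C, A.bracket x c ∈ U := by
  induction m generalizing W with
  | zero => exact absurd hm hWU
  | succ m ih =>
    by_cases hWC : A.prod W C ≤ U
    · obtain ⟨x, hxW, hxU⟩ := SetLike.not_le_iff_exists.1 hWU
      exact ⟨x, hxW, hxU, fun c hc => hWC (mem_prod hxW hc)⟩
    · obtain ⟨x, hx, hxU, hxC⟩ := ih (prod_mono hW le_rfl) hm hWC
      exact ⟨x, hW hx, hxU, hxC⟩

theorem exists_notMem_forall_bracket_mem_of_nilpotent [FiniteDimensional F L]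
    {C U W : Submodule F L} (hC : A.IsAbelian C) (hW : A.prod W C ≤ W)
    (hnil : ∀ c ∈ C, ∃ k, W.map (A.rightMul c ^ k) = ⊥) (hWU : ¬ W ≤ U) :
    ∃ x ∈ W, x ∉ U ∧ ∀ c ∈ C, A.bracket x c ∈ U := by
  obtain ⟨m, hm⟩ := exists_iterate_prod_eq_bot hW
    (fun c hc c' hc' d _ => bracket_bracket_comm (hC.bracket_eq_zero hc hc') d) hnil
  exact exists_notMem_forall_bracket_mem hW (hm ▸ bot_le) hWU

theorem prod_sup_le {C D : Submodule F L} (hD : A.IsAbelian D) (hCC : A.prod C C ≤ D)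
    (hCD : A.prod C D ≤ D) (hDC : A.prod D C ≤ D) : A.prod (C ⊔ D) (C ⊔ D) ≤ D := by
  rw [prod_sup_left, prod_sup_right, prod_sup_right]
  exact sup_le (sup_le hCC hCD) (sup_le hDC (hD.prod_le D))

theorem isNilpotentSub_sup [FiniteDimensional F L] {C D : Submodule F L} (hD : A.IsAbelian D)
    (hCC : A.prod C C ≤ D) (hCD : A.prod C D ≤ D) (hDC : A.prod D C ≤ D)
    (hnil : ∀ c ∈ C, ∃ k, D.map (A.rightMul c ^ k) = ⊥) : A.IsNilpotentSub (C ⊔ D) := by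
  obtain ⟨m, hm⟩ := exists_iterate_prod_eq_bot hDC (fun c hc c' hc' d hd => by
    have h := A.leibniz d c c'
    rwa [hD.bracket_eq_zero hd (hCC (mem_prod hc hc')), eq_comm, sub_eq_zero] at h) hnil
  -- modulo the abelian `D`, multiplying by `C ⊔ D` is multiplying by `C`
  have hiter : ∀ j, (fun W => A.prod W (C ⊔ D))^[j] (A.prod (C ⊔ D) (C ⊔ D)) ≤
      (fun W => A.prod W C)^[j] D := by
    intro j
    induction j with
    | zero => exact prod_sup_le hD hCC hCD hDC
    | succ j ihj =>
      rw [Function.iterate_succ_apply', Function.iterate_succ_apply', prod_sup_right]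
      exact sup_le (prod_mono ihj le_rfl) ((prod_mono (ihj.trans (iterate_prod_le_self hDC j))
        le_rfl).trans (hD.prod_le _))
  exact ⟨m + 1, by rw [lcs_succ_eq_iterate, ← le_bot_iff, ← hm]; exact hiter m⟩

end Engel

section GeneralizedKernel

variable {A}

theorem rightMul_pow_bracket_eq_zero {c x y : L} {a b : ℕ}
    (hx : (A.rightMul c ^ a) x = 0) (hy : (A.rightMul c ^ b) y = 0) :
    (A.rightMul c ^ (a + b)) (A.bracket x y) = 0 := by
  induction h : a + b generalizing a b x y with
  | zero =>
    obtain rfl : a = 0 := by omega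
    rw [pow_zero, Module.End.one_apply] at hx
    simp [hx]
  | succ n ih =>
    rcases a with _ | a
    · rw [pow_zero, Module.End.one_apply] at hx
      simp [hx]
    rcases b with _ | b
    · rw [pow_zero, Module.End.one_apply] at hy
      simp [hy]
    have hx' : (A.rightMul c ^ a) (A.bracket x c) = 0 := by
      rwa [pow_succ, Module.End.mul_apply] at hx
    have hy' : (A.rightMul c ^ b) (A.bracket y c) = 0 := by
      rwa [pow_succ, Module.End.mul_apply] at hy
    rw [pow_succ, Module.End.mul_apply, rightMul_apply, bracket_bracket_right, map_add,
      ih hx' hy (by omega), ih hx hy' (by omega), add_zero]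

theorem isSubalgebra_inf_ker_pow [FiniteDimensional F L] {S : Submodule F L}
    (hS : A.IsSubalgebra S) (c : L) {n : ℕ} (hn : finrank F L ≤ n) :
    A.IsSubalgebra (S ⊓ LinearMap.ker (A.rightMul c ^ n)) := by
  refine prod_le_iff.2 fun x hx y hy => ?_
  obtain ⟨⟨hxS, hx⟩, hyS, hy⟩ := And.intro (mem_inf.1 hx) (mem_inf.1 hy)
  exact mem_inf.2 ⟨hS (mem_prod hxS hyS), Module.End.pow_apply_eq_zero_of_le hn
    (hn.trans (Nat.le_add_left n n)) (rightMul_pow_bracket_eq_zero hx hy)⟩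

theorem rightMul_mem {S : Submodule F L} (hS : A.IsSubalgebra S) {c : L} (hc : c ∈ S) :
    ∀ x ∈ S, A.rightMul c x ∈ S :=
  fun _ hx => hS (mem_prod hx hc)

theorem map_rightMul_pow_succ_le {S : Submodule F L} (hS : A.IsSubalgebra S) {c : L}
    (hc : c ∈ S) (k : ℕ) : S.map (A.rightMul c ^ (k + 1)) ≤ A.prod S S := by
  rintro _ ⟨x, hx, rfl⟩
  rw [pow_succ', Module.End.mul_apply, rightMul_apply]
  exact mem_prod (pow_apply_mem (rightMul_mem hS hc) _ hx) hc

end GeneralizedKernel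

section Cartan

variable {A}

/-- Were `[c, x]` outside `C` for some `c ∈ C`, it would centralize `C`. -/
theorem mem_of_forall_bracket_mem {S C : Submodule F L} (hS : A.IsSubalgebra S) (hCS : C ≤ S)
    (hC : A.IsAbelian C)
    (hN : ∀ x ∈ S, (∀ c ∈ C, A.bracket x c ∈ C ∧ A.bracket c x ∈ C) → x ∈ C)
    {x : L} (hxS : x ∈ S) (hx : ∀ c ∈ C, A.bracket x c ∈ C) : x ∈ C := by
  refine hN x hxS fun c hc => ⟨hx c hc, ?_⟩
  by_contra hcx
  refine hcx (hN _ (hS (mem_prod (hCS hc) hxS)) fun c' hc' => ?_)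
  have hright : A.bracket (A.bracket c x) c' = 0 := by
    rw [bracket_bracket_left_comm (hC.bracket_eq_zero hc hc'),
      hC.bracket_eq_zero hc (hx c' hc')]
  have hleft : A.bracket c' (A.bracket c x) = 0 := by
    rw [A.leibniz, hC.bracket_eq_zero hc' hc, map_zero, LinearMap.zero_apply, zero_sub,
      bracket_bracket_left_comm (hC.bracket_eq_zero hc' hc), hC.bracket_eq_zero hc' (hx c hc),
      neg_zero]
  rw [hright, hleft]
  exact ⟨zero_mem C, zero_mem C⟩

theorem sup_prod_self_eq_of_selfNormalizing [FiniteDimensional F L] {S C : Submodule F L}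
    (hS : A.IsSubalgebra S) (hCS : C ≤ S) (hC : A.IsAbelian C)
    (hN : ∀ x ∈ S, (∀ c ∈ C, A.bracket x c ∈ C ∧ A.bracket c x ∈ C) → x ∈ C) :
    C ⊔ A.prod S S = S := by
  induction hd : finrank F S using Nat.strong_induction_on generalizing S with
  | _ d ih =>
  by_cases hnil : ∀ c ∈ C, ∃ k, S.map (A.rightMul c ^ k) = ⊥
  · refine le_antisymm (sup_le hCS hS) (le_sup_of_le_left ?_)
    by_contra hSC
    obtain ⟨x, hxS, hxC, hx⟩ := exists_notMem_forall_bracket_mem_of_nilpotent hC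
      ((prod_mono le_rfl hCS).trans hS) hnil hSC
    exact hxC (mem_of_forall_bracket_mem hS hCS hC hN hxS hx)
  push Not at hnil
  obtain ⟨c, hc, hcS⟩ := hnil
  -- pass to the Fitting null component of `rightMul c`, which still contains `C`
  set n := finrank F L + 1
  have hn : finrank F L ≤ n := Nat.le_succ _
  set S₀ := S ⊓ LinearMap.ker (A.rightMul c ^ n)
  have hCS₀ : C ≤ S₀ := fun c' hc' =>
    mem_inf.2 ⟨hCS hc', rightMul_pow_succ_apply_eq_zero (hC.bracket_eq_zero hc' hc) _⟩
  have hS₀ := ih _ (hd ▸ finrank_inf_ker_pow_lt (hcS n)) (isSubalgebra_inf_ker_pow hS c hn)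
    hCS₀ (fun x hx => hN x (mem_inf.1 hx).1) rfl
  refine le_antisymm (sup_le hCS hS) ?_
  calc S = S₀ ⊔ S.map (A.rightMul c ^ n) :=
        (inf_ker_pow_sup_map_pow _ (rightMul_mem hS (hCS hc)) hn).symm
    _ ≤ C ⊔ A.prod S S := sup_le (hS₀.symm.le.trans
        (sup_le_sup_left (prod_mono inf_le_left inf_le_left) _))
        (le_sup_of_le_right (map_rightMul_pow_succ_le hS (hCS hc) _))

end Cartan

section NoFixedPoints

variable {A}

theorem le_prod_sup_prod_of_sup_eq {C K K₀ K₁ : Submodule F L}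
    (hgen : K ≤ A.prod C K ⊔ A.prod K C) (hsup : K₀ ⊔ K₁ = K) (hdisj : Disjoint K₀ K₁)
    (h₀ : A.prod C K₀ ⊔ A.prod K₀ C ≤ K₀) (h₁ : A.prod C K₁ ⊔ A.prod K₁ C ≤ K₁) :
    K₀ ≤ A.prod C K₀ ⊔ A.prod K₀ C := by
  have h : K₀ ≤ (A.prod C K₀ ⊔ A.prod K₀ C) ⊔ K₁ :=
    calc K₀ ≤ A.prod C K ⊔ A.prod K C := (le_sup_left.trans hsup.le).trans hgen
      _ = (A.prod C K₀ ⊔ A.prod K₀ C) ⊔ (A.prod C K₁ ⊔ A.prod K₁ C) := by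
        rw [← hsup, prod_sup_right, prod_sup_left, sup_sup_sup_comm]
      _ ≤ _ := sup_le_sup_left h₁ _
  calc K₀ ≤ (A.prod C K₀ ⊔ A.prod K₀ C ⊔ K₁) ⊓ K₀ := le_inf h le_rfl
    _ = A.prod C K₀ ⊔ A.prod K₀ C := by
      rw [sup_inf_assoc_of_le _ h₀, disjoint_iff.1 hdisj.symm, sup_bot_eq]

/-- Induction on `dim K` through the Fitting decomposition of one `x ↦ [x, c]`; when all of them
are nilpotent on `K`, the subalgebra `C ⊔ K` is nilpotent, hence abelian, so that
`K = [C, K] + [K, C] = 0`. -/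
theorem eq_zero_of_forall_bracket_eq_zero [FiniteDimensional F L] (hA : A.IsAAlgebra)
    {C K : Submodule F L} (hC : A.IsAbelian C) (hK : A.IsAbelian K) (hCK : A.prod C K ≤ K)
    (hKC : A.prod K C ≤ K) (hgen : K ≤ A.prod C K ⊔ A.prod K C) {z : L} (hz : z ∈ K)
    (hzC : ∀ c ∈ C, A.bracket z c = 0) : z = 0 := by
  induction hd : finrank F K using Nat.strong_induction_on generalizing K with
  | _ d ih =>
  by_cases hnil : ∀ c ∈ C, ∃ k, K.map (A.rightMul c ^ k) = ⊥
  · have hab : A.IsAbelian (C ⊔ K) :=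
      hA _ ((prod_sup_le hK (hC.prod_le K) hCK hKC).trans le_sup_right)
        (isNilpotentSub_sup hK (hC.prod_le K) hCK hKC hnil)
    have hK0 : K = ⊥ := by
      refine eq_bot_iff.2 (hgen.trans (sup_le ?_ ?_)) <;>
        exact (prod_mono (by simp) (by simp)).trans (hab.prod_le ⊥)
    rw [hK0] at hz
    exact (mem_bot F).1 hz
  push Not at hnil
  obtain ⟨c, hc, hcK⟩ := hnil
  set n := finrank F L + 1
  have hn : finrank F L ≤ n := Nat.le_succ _
  set K₀ := K ⊓ LinearMap.ker (A.rightMul c ^ n)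
  set K₁ := K.map (A.rightMul c ^ n)
  have hKr : ∀ c' ∈ C, ∀ x ∈ K, A.rightMul c' x ∈ K :=
    fun c' hc' x hx => hKC (mem_prod hx hc')
  have hKl : ∀ c' ∈ C, ∀ x ∈ K, A.bracket c' x ∈ K :=
    fun c' hc' x hx => hCK (mem_prod hc' hx)
  have hCK₀ : A.prod C K₀ ≤ K₀ := prod_le_iff.2 fun c' hc' => apply_mem_inf_ker_pow
    (commute_rightMul_bracket (hC.bracket_eq_zero hc' hc)) (hKl c' hc') n
  have hK₀C : A.prod K₀ C ≤ K₀ := prod_le_iff.2 fun x hx c' hc' => apply_mem_inf_ker_pow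
    (commute_rightMul (hC.bracket_eq_zero hc hc')) (hKr c' hc') n x hx
  have hCK₁ : A.prod C K₁ ≤ K₁ := prod_le_iff.2 fun c' hc' => apply_mem_map_pow
    (commute_rightMul_bracket (hC.bracket_eq_zero hc' hc)) (hKl c' hc') n
  have hK₁C : A.prod K₁ C ≤ K₁ := prod_le_iff.2 fun x hx c' hc' => apply_mem_map_pow
    (commute_rightMul (hC.bracket_eq_zero hc hc')) (hKr c' hc') n x hx
  have hgen₀ := le_prod_sup_prod_of_sup_eq hgen (inf_ker_pow_sup_map_pow _ (hKr c hc) hn)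
    (disjoint_inf_ker_pow_map_pow _ K hn) (sup_le hCK₀ hK₀C) (sup_le hCK₁ hK₁C)
  exact ih _ (hd ▸ finrank_inf_ker_pow_lt (hcK n))
    (eq_bot_iff.2 ((prod_mono inf_le_left inf_le_left).trans (hK.prod_le ⊥))) hCK₀ hK₀C hgen₀
    (mem_inf.2 ⟨hz, rightMul_pow_succ_apply_eq_zero (hzC c hc) _⟩) rfl

theorem eq_zero_of_mem_prod_self [FiniteDimensional F L] (hA : A.IsAAlgebra)
    {S C : Submodule F L} (hmet : A.IsAbelian (A.prod S S)) (hC : A.IsAbelian C)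
    (hsup : C ⊔ A.prod S S = S) {z : L} (hz : z ∈ A.prod S S)
    (hzC : ∀ c ∈ C, A.bracket z c = 0) : z = 0 := by
  have hCS : C ≤ S := le_sup_left.trans hsup.le
  have hS'S : A.prod S S ≤ S := le_sup_right.trans hsup.le
  refine eq_zero_of_forall_bracket_eq_zero hA hC hmet (prod_mono hCS hS'S)
    (prod_mono hS'S hCS) ?_ hz hzC
  conv_lhs => rw [← hsup]
  rw [prod_sup_left, prod_sup_right, prod_sup_right, show A.prod C C = ⊥ from hC,
    show A.prod (A.prod S S) (A.prod S S) = ⊥ from hmet, bot_sup_eq, sup_bot_eq]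

theorem bracket_mem_sup_inf_ker_pow [FiniteDimensional F L] {C V : Submodule F L}
    (hC : A.IsAbelian C) (hVC : A.prod V C ≤ V) {c₀ : L} (hc₀ : c₀ ∈ C) {n : ℕ}
    (hn : finrank F L ≤ n) {x : L} (hx : ∀ c ∈ C, A.bracket x c ∈ C ⊔ V)
    (hx₀ : A.bracket x c₀ ∈ C ⊔ V ⊓ LinearMap.ker (A.rightMul c₀ ^ n)) {c : L} (hc : c ∈ C) :
    A.bracket x c ∈ C ⊔ V ⊓ LinearMap.ker (A.rightMul c₀ ^ n) := by
  obtain ⟨γ, hγ, a, ha, hxc₀⟩ := mem_sup.1 hx₀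
  obtain ⟨γ', hγ', v, hv, hxc⟩ := mem_sup.1 (hx c hc)
  -- the cocycle identity `[[x, c], c₀] = [[x, c₀], c]`
  have hv₀ : A.rightMul c₀ v = A.rightMul c a :=
    calc A.rightMul c₀ v = A.bracket (A.bracket x c) c₀ - A.bracket γ' c₀ := by
          rw [eq_sub_of_add_eq' hxc]; exact map_sub _ _ _
      _ = A.bracket (A.bracket x c₀) c := by
          rw [hC.bracket_eq_zero hγ' hc₀, sub_zero,
            bracket_bracket_comm (hC.bracket_eq_zero hc hc₀)]
      _ = A.rightMul c a := by
          rw [← hxc₀, map_add, LinearMap.add_apply, hC.bracket_eq_zero hγ hc, zero_add]; rfl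
  have hca := apply_mem_inf_ker_pow (commute_rightMul (hC.bracket_eq_zero hc₀ hc))
    (fun y hy => hVC (mem_prod hy hc)) n a ha
  refine hxc ▸ add_mem_sup hγ' (mem_inf.2 ⟨hv, ?_⟩)
  refine Module.End.pow_apply_eq_zero_of_le hn (Nat.le_succ_of_le hn) ?_
  rw [pow_succ, Module.End.mul_apply, hv₀]
  exact (mem_inf.1 hca).2

/-- `H¹(C, V) = 0` for a `C`-module `V` without fixed vectors. -/
theorem exists_mem_forall_bracket_sub_mem [FiniteDimensional F L] {C V : Submodule F L}
    (hC : A.IsAbelian C) (hVC : A.prod V C ≤ V)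
    (hfree : ∀ v ∈ V, (∀ c ∈ C, A.bracket v c = 0) → v = 0) {x : L}
    (hx : ∀ c ∈ C, A.bracket x c ∈ C ⊔ V) : ∃ k ∈ V, ∀ c ∈ C, A.bracket (x - k) c ∈ C := by
  induction hd : finrank F V using Nat.strong_induction_on generalizing V x with
  | _ d ih =>
  by_cases hnil : ∀ c ∈ C, ∃ k, V.map (A.rightMul c ^ k) = ⊥
  · obtain rfl : V = ⊥ := by
      by_contra hV
      obtain ⟨v, hv, hv0, hvC⟩ := exists_notMem_forall_bracket_mem_of_nilpotent hC hVC hnil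
        (U := ⊥) fun h => hV (eq_bot_iff.2 h)
      exact hv0 ((mem_bot F).2 (hfree v hv fun c hc => (mem_bot F).1 (hvC c hc)))
    exact ⟨0, zero_mem _, fun c hc => by simpa using hx c hc⟩
  push Not at hnil
  obtain ⟨c₀, hc₀, hc₀V⟩ := hnil
  set n := finrank F L + 1
  have hn : finrank F L ≤ n := Nat.le_succ _
  set f := A.rightMul c₀
  have hVr : ∀ c ∈ C, ∀ v ∈ V, A.rightMul c v ∈ V := fun c hc v hv => hVC (mem_prod hv hc)
  -- correct `x` by some `w ∈ V` so that `[x - w, c₀]` lies in `C ⊔ V₀`, `V₀ = V ⊓ ker (f ^ n)`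
  obtain ⟨γ, hγ, v, hv, hxc₀⟩ := mem_sup.1 (hx c₀ hc₀)
  rw [← inf_ker_pow_sup_map_pow f (hVr c₀ hc₀) hn] at hv
  obtain ⟨a, ha, _, ⟨u, hu, rfl⟩, rfl⟩ := mem_sup.1 hv
  set w := (f ^ finrank F L) u
  have hw : w ∈ V := pow_apply_mem (hVr c₀ hc₀) _ hu
  have hxw : ∀ c ∈ C, A.bracket (x - w) c ∈ C ⊔ V := fun c hc => by
    rw [map_sub, LinearMap.sub_apply]
    exact sub_mem (hx c hc) (mem_sup_right (hVr c hc w hw))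
  have hxwc₀ : A.bracket (x - w) c₀ = γ + a := by
    rw [map_sub, LinearMap.sub_apply, ← hxc₀, pow_succ', Module.End.mul_apply]
    simp only [f, rightMul_apply, w]
    abel
  obtain ⟨k₀, hk₀, hk₀C⟩ := ih _ (hd ▸ finrank_inf_ker_pow_lt (hc₀V n))
    (prod_le_iff.2 fun v hv c hc => apply_mem_inf_ker_pow
      (commute_rightMul (hC.bracket_eq_zero hc₀ hc)) (hVr c hc) n v hv)
    (fun v hv => hfree v (mem_inf.1 hv).1)
    (fun c hc => bracket_mem_sup_inf_ker_pow hC hVC hc₀ hn hxw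
      (hxwc₀ ▸ add_mem_sup hγ ha) hc) rfl
  exact ⟨w + k₀, add_mem hw (mem_inf.1 hk₀).1, fun c hc => sub_sub x w k₀ ▸ hk₀C c hc⟩

theorem bracket_mem_of_forall_bracket_mem {C V : Submodule F L} (hC : A.IsAbelian C)
    (hfree : ∀ v ∈ V, (∀ c ∈ C, A.bracket v c = 0) → v = 0) {y c : L}
    (hy : ∀ c' ∈ C, A.bracket y c' ∈ C) (hc : c ∈ C) (hcy : A.bracket c y ∈ C ⊔ V) :
    A.bracket c y ∈ C := by
  obtain ⟨γ, hγ, v, hv, hsum⟩ := mem_sup.1 hcy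
  have hv0 : v = 0 := hfree v hv fun c' hc' => by
    rw [eq_sub_of_add_eq' hsum, map_sub, LinearMap.sub_apply,
      bracket_bracket_left_comm (hC.bracket_eq_zero hc hc'), hC.bracket_eq_zero hc (hy c' hc'),
      hC.bracket_eq_zero hγ hc', sub_zero]
  rw [← hsum, hv0, add_zero]
  exact hγ

end NoFixedPoints

section Complements

def normalizer (C : Submodule F L) : Submodule F L :=
  ⨅ c ∈ C, C.comap (A.rightMul c) ⊓ C.comap (A.bracket c)

variable {A}

theorem mem_normalizer {C : Submodule F L} {x : L} :
    x ∈ A.normalizer C ↔ ∀ c ∈ C, A.bracket x c ∈ C ∧ A.bracket c x ∈ C := by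
  simp [normalizer]

theorem isSubalgebra_normalizer (C : Submodule F L) : A.IsSubalgebra (A.normalizer C) := by
  refine prod_le_iff.2 fun x hx y hy => mem_normalizer.2 fun c hc => ⟨?_, ?_⟩
  · rw [bracket_bracket_right]
    exact add_mem ((mem_normalizer.1 hy _ (mem_normalizer.1 hx c hc).1).2)
      ((mem_normalizer.1 hx _ (mem_normalizer.1 hy c hc).1).1)
  · rw [A.leibniz]
    exact sub_mem ((mem_normalizer.1 hy _ (mem_normalizer.1 hx c hc).2).2)
      ((mem_normalizer.1 hx _ (mem_normalizer.1 hy c hc).2).2)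

/-- Among the subalgebras supplementing `M' = [M, M]`, one of minimal dimension meets `M'`
trivially. -/
theorem exists_isSubalgebra_compl_prod_self [FiniteDimensional F L] (hA : A.IsAAlgebra)
    {M : Submodule F L} (hM : A.IsSubalgebra M) (hmet : A.IsAbelian (A.prod M M)) :
    ∃ C, A.IsSubalgebra C ∧ C ≤ M ∧ C ⊓ A.prod M M = ⊥ ∧ C ⊔ A.prod M M = M := by
  suffices ∀ C, A.IsSubalgebra C → C ≤ M → C ⊔ A.prod M M = M →
      ∃ C', A.IsSubalgebra C' ∧ C' ≤ M ∧ C' ⊓ A.prod M M = ⊥ ∧ C' ⊔ A.prod M M = M from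
    this M hM le_rfl (sup_eq_left.2 hM)
  intro C hC hCM hCsup
  induction hd : finrank F C using Nat.strong_induction_on generalizing C with
  | _ d ih =>
  set D := C ⊓ A.prod M M
  by_cases hD : D = ⊥
  · exact ⟨C, hC, hCM, hD, hCsup⟩
  have hCC : A.prod C C ≤ D := le_inf hC (prod_mono hCM hCM)
  by_cases hnil : ∀ c ∈ C, ∃ k, D.map (A.rightMul c ^ k) = ⊥
  · -- `C` is nilpotent, hence abelian, and a complement of `D` in `C` is a smaller supplement
    have hDab : A.IsAbelian D := eq_bot_iff.2 ((prod_mono inf_le_right inf_le_right).trans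
      (hmet.prod_le ⊥))
    have hCab : A.IsAbelian C := hA C hC <| sup_eq_left.2 (inf_le_left : D ≤ C) ▸
      isNilpotentSub_sup hDab hCC ((prod_mono le_rfl inf_le_left).trans hCC)
        ((prod_mono inf_le_left le_rfl).trans hCC) hnil
    obtain ⟨C₁, hC₁, hC₁D⟩ := exists_lt_sup_eq (inf_le_left : D ≤ C) hD
    refine ih _ (hd ▸ finrank_lt_finrank_of_lt hC₁) C₁
      ((prod_mono hC₁.le hC₁.le).trans (hCab.prod_le _)) (hC₁.le.trans hCM) ?_ rfl
    refine le_antisymm (sup_le (hC₁.le.trans hCM) hM) ?_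
    calc M = C₁ ⊔ D ⊔ A.prod M M := by rw [hC₁D, hCsup]
      _ ≤ _ := sup_le (sup_le le_sup_left (le_sup_of_le_right inf_le_right)) le_sup_right
  · -- the Fitting null component of a non-nilpotent `rightMul c` is a smaller supplement
    push Not at hnil
    obtain ⟨c, hc, hcD⟩ := hnil
    set n := finrank F L + 1
    have hn : finrank F L ≤ n := Nat.le_succ _
    refine ih _ (hd ▸ finrank_inf_ker_pow_lt fun h => hcD n (eq_bot_iff.2 (h ▸ map_mono
      inf_le_left))) _ (isSubalgebra_inf_ker_pow hC c hn) (inf_le_left.trans hCM) ?_ rfl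
    refine le_antisymm (sup_le (inf_le_left.trans hCM) hM) ?_
    calc M = C ⊓ LinearMap.ker (A.rightMul c ^ n) ⊔ C.map (A.rightMul c ^ n) ⊔ A.prod M M := by
          rw [inf_ker_pow_sup_map_pow _ (rightMul_mem hC hc) hn, hCsup]
      _ ≤ _ := sup_le (sup_le le_sup_left (le_sup_of_le_right
          ((map_rightMul_pow_succ_le hC hc _).trans (prod_mono hCM hCM)))) le_sup_right

/-- The complement is the normalizer in `S` of a complement `C` of `K = [M, M]` in `M`: it meets
`K` trivially since `C` fixes no vector of `K`, and it supplements `K` since `H¹(C, K) = 0`. -/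
theorem exists_isSubalgebra_compl_prod_self_of_isIdealIn [FiniteDimensional F L]
    (hA : A.IsAAlgebra) {S M : Submodule F L} (hS : A.IsSubalgebra S) (hMS : A.IsIdealIn S M)
    (hmet : A.IsAbelian (A.prod M M)) :
    ∃ N, A.IsSubalgebra N ∧ N ≤ S ∧ A.prod M M ⊓ N = ⊥ ∧ A.prod M M ⊔ N = S := by
  obtain ⟨hMS, hMS', hSM⟩ := hMS
  have hM : A.IsSubalgebra M := (prod_mono le_rfl hMS).trans hMS'
  obtain ⟨C, hCsub, hCM, hCinf, hCsup⟩ := exists_isSubalgebra_compl_prod_self hA hM hmet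
  have hC : A.IsAbelian C := eq_bot_iff.2 (hCinf ▸ le_inf hCsub (prod_mono hCM hCM))
  have hfree : ∀ v ∈ A.prod M M, (∀ c ∈ C, A.bracket v c = 0) → v = 0 :=
    fun v hv hvC => eq_zero_of_mem_prod_self hA hmet hC hCsup hv hvC
  have hKC : A.prod (A.prod M M) C ≤ A.prod M M := prod_mono hM hCM
  refine ⟨S ⊓ A.normalizer C, hS.inf (isSubalgebra_normalizer C), inf_le_left,
    eq_bot_iff.2 fun x hx => ?_, le_antisymm (sup_le (hM.trans hMS) inf_le_left) fun x hx => ?_⟩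
  · obtain ⟨hxK, hxSN⟩ := mem_inf.1 hx
    refine (mem_bot F).2 (hfree x hxK fun c hc => (mem_bot F).1 ?_)
    rw [← hCinf]
    exact mem_inf.2 ⟨(mem_normalizer.1 (mem_inf.1 hxSN).2 c hc).1, hKC (mem_prod hxK hc)⟩
  · have hxC : ∀ c ∈ C, A.bracket x c ∈ C ⊔ A.prod M M := fun c hc =>
      hCsup.symm ▸ hSM (mem_prod hx (hCM hc))
    obtain ⟨k, hk, hkC⟩ := exists_mem_forall_bracket_sub_mem hC hKC hfree hxC
    have hy : x - k ∈ S := sub_mem hx (hMS (hM hk))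
    rw [← add_sub_cancel k x]
    refine add_mem_sup hk (mem_inf.2 ⟨hy, mem_normalizer.2 fun c hc => ⟨hkC c hc, ?_⟩⟩)
    exact bracket_mem_of_forall_bracket_mem hC hfree hkC hc
      (hCsup.symm ▸ hMS' (mem_prod (hCM hc) hy))

end Complements

section DerivedSeries

def derSeriesOf (S : Submodule F L) : ℕ → Submodule F L
  | 0 => S
  | k + 1 => A.prod (derSeriesOf S k) (derSeriesOf S k)

variable {A}

theorem derSeries_eq_derSeriesOf_top (i : ℕ) : A.derSeries i = A.derSeriesOf ⊤ i := by
  induction i with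
  | zero => rfl
  | succ i ih => rw [derSeries, derSeriesOf, ih]

theorem isSubalgebra_bot : A.IsSubalgebra ⊥ :=
  prod_le_iff.2 fun x hx _ _ => by
    rw [(mem_bot F).1 hx, map_zero, LinearMap.zero_apply]
    exact zero_mem _

theorem forall_mem_prod_apply_mem {U V W : Submodule F L} {g : Module.End F L}
    (h : ∀ u ∈ U, ∀ v ∈ V, g (A.bracket u v) ∈ W) : ∀ x ∈ A.prod U V, g x ∈ W :=
  fun _ hx => (prod_le_iff.2 h : A.prod U V ≤ W.comap g) hx

theorem IsIdealIn.prod_self {S D : Submodule F L} (hD : A.IsIdealIn S D) :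
    A.IsIdealIn S (A.prod D D) := by
  obtain ⟨hDS, hDr, hDl⟩ := hD
  refine ⟨(prod_mono le_rfl hDS).trans (hDr.trans hDS), prod_le_iff.2 fun x hx s hs => ?_,
    prod_le_iff.2 fun s hs x hx => ?_⟩
  · refine forall_mem_prod_apply_mem (g := A.rightMul s) (fun d hd d' hd' => ?_) x hx
    rw [rightMul_apply, bracket_bracket_right]
    exact add_mem (mem_prod (hDr (mem_prod hd hs)) hd') (mem_prod hd (hDr (mem_prod hd' hs)))
  · refine forall_mem_prod_apply_mem (g := A.bracket s) (fun d hd d' hd' => ?_) x hx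
    rw [A.leibniz]
    exact sub_mem (mem_prod (hDl (mem_prod hs hd)) hd') (mem_prod (hDl (mem_prod hs hd')) hd)

theorem prod_sup_sup_le {S K X Y : Submodule F L} (hK : A.IsIdealIn S K) (hX : X ≤ S)
    (hY : Y ≤ S) : A.prod (X ⊔ K) (Y ⊔ K) ≤ A.prod X Y ⊔ K := by
  rw [prod_sup_left, prod_sup_right, prod_sup_right]
  exact sup_le (sup_le le_sup_left (le_sup_of_le_right ((prod_mono hX le_rfl).trans hK.2.2)))
    (le_sup_of_le_right (sup_le ((prod_mono le_rfl hY).trans hK.2.1)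
      ((prod_mono le_rfl hK.1).trans hK.2.1)))

theorem isIdealIn_derSeriesOf {S : Submodule F L} (hS : A.IsSubalgebra S) (i : ℕ) :
    A.IsIdealIn S (A.derSeriesOf S i) := by
  induction i with
  | zero => exact ⟨le_rfl, hS, hS⟩
  | succ i ih => exact ih.prod_self

theorem isIdealIn_derSeries (i : ℕ) : A.IsIdealIn ⊤ (A.derSeries i) := by
  rw [derSeries_eq_derSeriesOf_top]
  exact isIdealIn_derSeriesOf le_top i

theorem derSeriesOf_le {S : Submodule F L} (hS : A.IsSubalgebra S) (i : ℕ) :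
    A.derSeriesOf S i ≤ S :=
  (isIdealIn_derSeriesOf hS i).1

theorem derSeriesOf_antitone {S : Submodule F L} (hS : A.IsSubalgebra S) :
    Antitone (A.derSeriesOf S) :=
  antitone_nat_of_succ_le fun i => (prod_mono le_rfl (derSeriesOf_le hS i)).trans
    (isIdealIn_derSeriesOf hS i).2.1

theorem derSeriesOf_mono {N S : Submodule F L} (h : N ≤ S) (i : ℕ) :
    A.derSeriesOf N i ≤ A.derSeriesOf S i := by
  induction i with
  | zero => exact h
  | succ i ih => exact prod_mono ih ih

theorem derSeriesOf_le_sup {S N K : Submodule F L} (hN : A.IsSubalgebra N) (hNS : N ≤ S)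
    (hK : A.IsIdealIn S K) (hNK : N ⊔ K = S) (i : ℕ) :
    A.derSeriesOf S i ≤ A.derSeriesOf N i ⊔ K := by
  induction i with
  | zero => exact hNK.ge
  | succ i ih =>
    have hNi : A.derSeriesOf N i ≤ S := (derSeriesOf_le hN i).trans hNS
    exact (prod_mono ih ih).trans (prod_sup_sup_le hK hNi hNi)

/-- Induction on the derived length: the last nonzero term `K` has a subalgebra complement `N`,
and `S⁽ⁱ⁾ = N⁽ⁱ⁾ ⊔ K` as long as `K ≤ S⁽ⁱ⁾`. -/
theorem exists_isSubalgebra_compl_derSeriesOf [FiniteDimensional F L] (hA : A.IsAAlgebra)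
    {S : Submodule F L} (hS : A.IsSubalgebra S) {d : ℕ} (hd : A.derSeriesOf S d = ⊥) (i : ℕ) :
    ∃ B, A.IsSubalgebra B ∧ B ≤ S ∧ A.derSeriesOf S i ⊓ B = ⊥ ∧
      A.derSeriesOf S i ⊔ B = S := by
  induction d generalizing S with
  | zero =>
    have hi : A.derSeriesOf S i = ⊥ := eq_bot_iff.2 ((derSeriesOf_le hS i).trans hd.le)
    exact ⟨S, hS, le_rfl, by rw [hi, bot_inf_eq], by rw [hi, bot_sup_eq]⟩
  | succ d ih =>
    by_cases hi : A.derSeriesOf S i = ⊥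
    · exact ⟨S, hS, le_rfl, by rw [hi, bot_inf_eq], by rw [hi, bot_sup_eq]⟩
    have hid : i ≤ d := by
      by_contra h
      exact hi (eq_bot_iff.2 ((derSeriesOf_antitone hS (by omega : d + 1 ≤ i)).trans hd.le))
    cases d with
    | zero =>
      obtain rfl : i = 0 := by omega
      exact ⟨⊥, isSubalgebra_bot, bot_le, inf_bot_eq _, sup_bot_eq _⟩
    | succ e =>
      obtain ⟨N, hN, hNS, hKN, hKNS⟩ : ∃ N, A.IsSubalgebra N ∧ N ≤ S ∧
          A.derSeriesOf S (e + 1) ⊓ N = ⊥ ∧ A.derSeriesOf S (e + 1) ⊔ N = S :=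
        exists_isSubalgebra_compl_prod_self_of_isIdealIn hA hS (isIdealIn_derSeriesOf hS e) hd
      have hNd : A.derSeriesOf N (e + 1) = ⊥ :=
        eq_bot_iff.2 (hKN ▸ le_inf (derSeriesOf_mono hNS _) (derSeriesOf_le hN _))
      obtain ⟨B, hB, hBN, hBinf, hBsup⟩ := ih hN hNd
      have hSi : A.derSeriesOf S i = A.derSeriesOf N i ⊔ A.derSeriesOf S (e + 1) :=
        le_antisymm (derSeriesOf_le_sup hN hNS (isIdealIn_derSeriesOf hS _)
          ((sup_comm _ _).trans hKNS) i)
          (sup_le (derSeriesOf_mono hNS i) (derSeriesOf_antitone hS hid))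
      refine ⟨B, hB, hBN.trans hNS, eq_bot_iff.2 ?_, ?_⟩
      · calc A.derSeriesOf S i ⊓ B ≤ (A.derSeriesOf N i ⊔ A.derSeriesOf S (e + 1)) ⊓ N ⊓ B := by
              rw [hSi, inf_assoc, inf_eq_right.2 hBN]
          _ = A.derSeriesOf N i ⊓ B := by
              rw [sup_inf_assoc_of_le _ (derSeriesOf_le hN i), hKN, sup_bot_eq]
          _ = ⊥ := hBinf
      · rw [hSi, sup_right_comm, hBsup, sup_comm, hKNS]

end DerivedSeries

section CartanSubalgebras

variable {A}

theorem isNilpotentSub_and_selfNormalizing_iff [FiniteDimensional F L] (hA : A.IsAAlgebra)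
    {S C : Submodule F L} (hS : A.IsSubalgebra S) (hmet : A.IsAbelian (A.prod S S))
    (hC : A.IsSubalgebra C) (hCS : C ≤ S) :
    (A.IsNilpotentSub C ∧ ∀ x ∈ S, (∀ c ∈ C, A.bracket x c ∈ C ∧ A.bracket c x ∈ C) → x ∈ C) ↔
      C ⊓ A.prod S S = ⊥ ∧ C ⊔ A.prod S S = S := by
  constructor
  · rintro ⟨hnil, hN⟩
    have hCab : A.IsAbelian C := hA C hC hnil
    have hsup := sup_prod_self_eq_of_selfNormalizing hS hCS hCab hN
    refine ⟨eq_bot_iff.2 fun x hx => (mem_bot F).2 ?_, hsup⟩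
    exact eq_zero_of_mem_prod_self hA hmet hCab hsup (mem_inf.1 hx).2
      fun c hc => hCab.bracket_eq_zero (mem_inf.1 hx).1 hc
  · rintro ⟨hinf, hsup⟩
    have hCab : A.IsAbelian C := eq_bot_iff.2 (hinf ▸ le_inf hC (prod_mono hCS hCS))
    refine ⟨⟨1, hCab⟩, fun x hx hxN => ?_⟩
    rw [← hsup] at hx
    obtain ⟨c₀, hc₀, z, hz, rfl⟩ := mem_sup.1 hx
    suffices z = 0 by rwa [this, add_zero]
    refine eq_zero_of_mem_prod_self hA hmet hCab hsup hz fun c hc => (mem_bot F).1 ?_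
    rw [← hinf]
    have h := (hxN c hc).1
    rw [map_add, LinearMap.add_apply, hCab.bracket_eq_zero hc₀ hc, zero_add] at h
    exact mem_inf.2 ⟨h, mem_prod (hS hz) (hCS hc)⟩

end CartanSubalgebras

/-! A subalgebra complement `B` of an ideal `J` is a model of the quotient by `J`: a subspace
`X ⊇ J` corresponds to `X ⊓ B`. -/

section Quotient

variable {A}

theorem prod_inf_eq {J B X Y : Submodule F L} (hJ : A.IsIdealIn ⊤ J) (hB : A.IsSubalgebra B)
    (hJB : IsCompl J B) (hX : J ≤ X) (hY : J ≤ Y) :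
    A.prod (X ⊓ B) (Y ⊓ B) = A.prod X Y ⊓ B := by
  refine le_antisymm (le_inf (prod_mono inf_le_left inf_le_left)
    ((prod_mono inf_le_right inf_le_right).trans hB)) (hJB.inf_le_of_le_sup
      ((prod_mono inf_le_right inf_le_right).trans hB) ?_)
  conv_lhs => rw [← hJB.inf_sup_eq_of_le hX, ← hJB.inf_sup_eq_of_le hY]
  exact prod_sup_sup_le hJ le_top le_top

theorem lcs_sup_eq {J B C : Submodule F L} (hJ : A.IsIdealIn ⊤ J) (hJB : IsCompl J B)
    (hJC : J ≤ C) (n : ℕ) : A.lcs C n ⊔ J = A.lcs (C ⊓ B) n ⊔ J := by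
  induction n with
  | zero => exact (sup_eq_left.2 hJC).trans (hJB.inf_sup_eq_of_le hJC).symm
  | succ n ih =>
    refine le_antisymm (sup_le ?_ le_sup_right) (sup_le_sup_right (lcs_mono inf_le_left _) _)
    calc A.lcs C (n + 1) ≤ A.prod (A.lcs (C ⊓ B) n ⊔ J) (C ⊓ B ⊔ J) :=
          prod_mono (ih ▸ le_sup_left) (hJB.inf_sup_eq_of_le hJC).ge
      _ ≤ A.lcs (C ⊓ B) (n + 1) ⊔ J := prod_sup_sup_le hJ le_top le_top

theorem exists_lcs_le_iff_isNilpotentSub_inf {J B C : Submodule F L} (hJ : A.IsIdealIn ⊤ J)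
    (hB : A.IsSubalgebra B) (hJB : IsCompl J B) (hC : A.IsSubalgebra C) (hJC : J ≤ C) :
    (∃ n, A.lcs C n ≤ J) ↔ A.IsNilpotentSub (C ⊓ B) := by
  refine exists_congr fun n => ?_
  rw [← sup_eq_right, lcs_sup_eq hJ hJB hJC, sup_eq_right, ← le_bot_iff, ← hJB.inf_eq_bot]
  exact ⟨fun h => le_inf h ((lcs_le (hC.inf hB) n).trans inf_le_right),
    fun h => h.trans inf_le_left⟩

theorem selfNormalizing_iff_inf {J B C M : Submodule F L} (hJ : A.IsIdealIn ⊤ J)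
    (hB : A.IsSubalgebra B) (hJB : IsCompl J B) (hJC : J ≤ C) (hJM : J ≤ M) :
    (∀ x ∈ M, (∀ c ∈ C, A.bracket x c ∈ C ∧ A.bracket c x ∈ C) → x ∈ C) ↔
      ∀ x ∈ M ⊓ B, (∀ c ∈ C ⊓ B, A.bracket x c ∈ C ⊓ B ∧ A.bracket c x ∈ C ⊓ B) →
        x ∈ C ⊓ B := by
  have hJr : ∀ x, ∀ j ∈ J, A.bracket j x ∈ C := fun x j hj => hJC (hJ.2.1 (mem_prod hj mem_top))
  have hJl : ∀ x, ∀ j ∈ J, A.bracket x j ∈ C := fun x j hj => hJC (hJ.2.2 (mem_prod mem_top hj))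
  constructor
  · intro hN x hx hxN
    refine mem_inf.2 ⟨hN x (mem_inf.1 hx).1 fun c hc => ?_, (mem_inf.1 hx).2⟩
    rw [← hJB.inf_sup_eq_of_le hJC] at hc
    obtain ⟨c', hc', j, hj, rfl⟩ := mem_sup.1 hc
    rw [map_add, map_add, LinearMap.add_apply]
    exact ⟨add_mem (mem_inf.1 (hxN c' hc').1).1 (hJl x j hj),
      add_mem (mem_inf.1 (hxN c' hc').2).1 (hJr x j hj)⟩
  · intro hN x hx hxN
    rw [← hJB.inf_sup_eq_of_le hJM] at hx
    obtain ⟨s, hs, j, hj, rfl⟩ := mem_sup.1 hx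
    refine add_mem (mem_inf.1 (hN s hs fun c hc => ?_)).1 (hJC hj)
    obtain ⟨hcC, hcB⟩ := mem_inf.1 hc
    have hsB := (mem_inf.1 hs).2
    refine ⟨mem_inf.2 ⟨?_, hB (mem_prod hsB hcB)⟩, mem_inf.2 ⟨?_, hB (mem_prod hcB hsB)⟩⟩
    · have h := sub_mem (hxN c hcC).1 (hJr c j hj)
      rwa [map_add, LinearMap.add_apply, add_sub_cancel_right] at h
    · have h := sub_mem (hxN c hcC).2 (hJl c j hj)
      rwa [map_add, add_sub_cancel_right] at h

theorem isNilpotentSub_mod_and_selfNormalizing_iff [FiniteDimensional F L] (hA : A.IsAAlgebra)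
    {M B C : Submodule F L} (hM : A.IsSubalgebra M)
    (hJ : A.IsIdealIn ⊤ (A.prod (A.prod M M) (A.prod M M))) (hB : A.IsSubalgebra B)
    (hJB : IsCompl (A.prod (A.prod M M) (A.prod M M)) B) (hC : A.IsSubalgebra C)
    (hJC : A.prod (A.prod M M) (A.prod M M) ≤ C) (hCM : C ≤ M) :
    ((∃ n, A.lcs C n ≤ A.prod (A.prod M M) (A.prod M M)) ∧
        ∀ x ∈ M, (∀ c ∈ C, A.bracket x c ∈ C ∧ A.bracket c x ∈ C) → x ∈ C) ↔
      C ⊓ A.prod M M = A.prod (A.prod M M) (A.prod M M) ∧ C ⊔ A.prod M M = M := by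
  have hJM' : A.prod (A.prod M M) (A.prod M M) ≤ A.prod M M := prod_mono hM hM
  have hJM := hJM'.trans hM
  have hS' : A.prod (M ⊓ B) (M ⊓ B) = A.prod M M ⊓ B := prod_inf_eq hJ hB hJB hJM hJM
  have hmet : A.IsAbelian (A.prod (M ⊓ B) (M ⊓ B)) := by
    rw [IsAbelian, hS', prod_inf_eq hJ hB hJB hJM' hJM', hJB.inf_eq_bot]
  have key := isNilpotentSub_and_selfNormalizing_iff hA (hM.inf hB) hmet (hC.inf hB)
    (inf_le_inf_right B hCM)
  rwa [hS', ← hJB.inf_eq_iff hJC hJM', ← hJB.sup_eq_iff hJC hJM' hJM,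
    ← selfNormalizing_iff_inf hJ hB hJB hJC hJM,
    ← exists_lcs_le_iff_isNilpotentSub_inf hJ hB hJB hC hJC] at key

end Quotient

end LeibnizAlg

/-- A solvable Leibniz A-algebra `L` splits over each term of its derived
series: for every `i` there is a subalgebra `B` with `L = L^(i) ∔ B`.  Moreover, for each
`i` the Cartan subalgebras of `L^(i)/L^(i+2)` (identified with the subalgebras `C` with
`L^(i+2) ≤ C ≤ L^(i)` that are nilpotent mod `L^(i+2)` and self-normalizing in `L^(i)`
mod `L^(i+2)`) are precisely the subalgebras complementary to `L^(i+1)/L^(i+2)` in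
`L^(i)/L^(i+2)`. -/
theorem solvable_A_algebra_splits_over_derived_series
    {F L : Type*} [Field F] [AddCommGroup L] [Module F L] [FiniteDimensional F L]
    (A : LeibnizAlg F L) (hA : A.IsAAlgebra) (hsolv : A.IsSolvable) :
    (∀ i : ℕ, ∃ B : Submodule F L, A.IsSubalgebra B ∧
        A.derSeries i ⊓ B = ⊥ ∧ A.derSeries i ⊔ B = ⊤) ∧
    (∀ i : ℕ, ∀ C : Submodule F L, A.IsSubalgebra C →
        A.derSeries (i + 2) ≤ C → C ≤ A.derSeries i →
      (((∃ n : ℕ, A.lcs C n ≤ A.derSeries (i + 2)) ∧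
          ∀ x ∈ A.derSeries i,
            (∀ c ∈ C, A.bracket x c ∈ C ∧ A.bracket c x ∈ C) → x ∈ C) ↔
        (C ⊓ A.derSeries (i + 1) = A.derSeries (i + 2) ∧
          C ⊔ A.derSeries (i + 1) = A.derSeries i))) := by
  obtain ⟨d, hd⟩ := hsolv
  have hsplit : ∀ i, ∃ B, A.IsSubalgebra B ∧ A.derSeries i ⊓ B = ⊥ ∧ A.derSeries i ⊔ B = ⊤ := by
    intro i
    rw [LeibnizAlg.derSeries_eq_derSeriesOf_top] at hd ⊢
    obtain ⟨B, hB, -, hB'⟩ := LeibnizAlg.exists_isSubalgebra_compl_derSeriesOf hA le_top hd i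
    exact ⟨B, hB, hB'⟩
  refine ⟨hsplit, fun i C hC hJC hCM => ?_⟩
  obtain ⟨B, hB, hJB, hJB'⟩ := hsplit (i + 2)
  exact LeibnizAlg.isNilpotentSub_mod_and_selfNormalizing_iff hA
    (LeibnizAlg.isIdealIn_derSeries i).isSubalgebra (LeibnizAlg.isIdealIn_derSeries (i + 2))
    hB (IsCompl.of_eq hJB hJB') hC hJC hCM
end

section
/- Let L be a solvable Leibniz A-algebra of derived length n+1. Then (i) L = A_n ∔ A_{n−1} ∔ … ∔ A_0 (vector space direct sum) where each A_i is an abelian subalgebra of L, and (ii) this decomposition can be chosen so that L^(i) = A_n ∔ A_{n−1} ∔ … ∔ A_i for each 0 ≤ i ≤ n. -/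
/-!
Every `L^(i)` is a subalgebra, so it suffices to split `L^(i) = B_i ∔ L^(i+1)` with `B_i`
abelian: the chain then telescopes. Given a subalgebra `U` of a solvable `A`-algebra, an
abelian supplement of `[U, U]` in `U` is found by induction on `dim U`. If some right
multiplication `R_x` is not nilpotent on `U`, its Fitting null component on `U` is a proper
subalgebra which together with `[U, U]` spans `U`, and we recurse into it. If every `R_x` is
nilpotent on `U`, then `U` is abelian: by induction every proper subspace containing
`[U, U]` is an abelian subalgebra, so either `U = [U, U] + Fz` and `U^(k+2) ⊆ R_z^k [U, U]`,
or `[[U, U], U] = 0`; either way `U` is nilpotent, hence abelian.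
-/

section ChainDecomposition

variable {α : Type*} [CompleteLattice α] {B D : ℕ → α}

theorem antitone_of_sup_eq (hB : ∀ i, B i ⊔ D (i + 1) = D i) : Antitone D :=
  antitone_nat_of_succ_le fun i => hB i ▸ le_sup_right

theorem eq_iSup_ge_of_sup_eq (hB : ∀ i, B i ⊔ D (i + 1) = D i) {m : ℕ} (hm : D m = ⊥)
    (i : Fin m) : D i = ⨆ j : Fin m, ⨆ _ : i ≤ j, B j := by
  refine le_antisymm ?_ (iSup₂_le fun j hij => ?_)
  · suffices ∀ k ≤ m, D k ≤ ⨆ j : Fin m, ⨆ _ : k ≤ (j : ℕ), B j from this i i.isLt.le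
    intro k hk
    induction hk using Nat.decreasingInduction with
    | self => simp [hm]
    | of_succ k hk ih =>
      rw [← hB k]
      refine sup_le (le_iSup₂_of_le (⟨k, hk⟩ : Fin m) le_rfl le_rfl) (ih.trans ?_)
      exact iSup₂_mono' fun j hj => ⟨j, by omega, le_rfl⟩
  · exact (hB j ▸ le_sup_left).trans (antitone_of_sup_eq hB hij)

theorem iSupIndep_of_sup_eq_of_disjoint [IsModularLattice α] (hB : ∀ i, B i ⊔ D (i + 1) = D i)
    (hdisj : ∀ i, Disjoint (B i) (D (i + 1))) : iSupIndep B := by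
  have hprev : ∀ i, Disjoint (⨆ j < i, B j) (D i) := by
    intro i
    induction i with
    | zero => simp
    | succ i ih =>
      rw [Nat.iSup_lt_succ]
      exact (hdisj i).disjoint_sup_left_of_disjoint_sup_right (hB i ▸ ih)
  refine iSupIndep_def.2 fun i => ?_
  have hrest : ⨆ (j) (_ : j ≠ i), B j ≤ D (i + 1) ⊔ ⨆ j < i, B j := by
    refine iSup₂_le fun j hji => ?_
    rcases hji.lt_or_gt with hj | hj
    · exact le_sup_of_le_right (le_iSup₂_of_le j hj le_rfl)
    · exact le_sup_of_le_left ((hB j ▸ le_sup_left).trans (antitone_of_sup_eq hB hj))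
  exact ((hdisj i).disjoint_sup_right_of_disjoint_sup_left
    ((hB i).symm ▸ (hprev i).symm)).mono_right hrest

end ChainDecomposition

theorem Module.End.pow_add_apply_eq_zero_of_derivation {R M : Type*} [CommSemiring R]
    [AddCommMonoid M] [Module R M] (β : M →ₗ[R] M →ₗ[R] M) {D : Module.End R M}
    (hD : ∀ a b, D (β a b) = β (D a) b + β a (D b)) {p q : ℕ} {a b : M}
    (ha : (D ^ p) a = 0) (hb : (D ^ q) b = 0) : (D ^ (p + q)) (β a b) = 0 := by
  induction h : p + q generalizing p q a b with
  | zero =>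
    obtain ⟨rfl, rfl⟩ : p = 0 ∧ q = 0 := by omega
    simp_all
  | succ n ih =>
    rcases p with _ | p
    · simp_all
    rcases q with _ | q
    · simp_all
    rw [pow_succ, Module.End.mul_apply, hD, map_add, ih (p := p) (q := q + 1) ?_ hb (by omega),
      ih (p := p + 1) (q := q) ha ?_ (by omega), add_zero]
    all_goals rwa [← Module.End.mul_apply, ← pow_succ]

namespace LeibnizAlg

variable {F L : Type*} [Field F] [AddCommGroup L] [Module F L] (A : LeibnizAlg F L)
  {U W : Submodule F L}

theorem mem_prod_s5 {M N : Submodule F L} {m n : L} (hm : m ∈ M) (hn : n ∈ N) :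
    A.bracket m n ∈ A.prod M N :=
  Submodule.subset_span ⟨m, hm, n, hn, rfl⟩

theorem prod_le_iff_s5 {M N P : Submodule F L} :
    A.prod M N ≤ P ↔ ∀ m ∈ M, ∀ n ∈ N, A.bracket m n ∈ P := by
  refine ⟨fun h m hm n hn => h (A.mem_prod_s5 hm hn), fun h => Submodule.span_le.2 ?_⟩
  rintro _ ⟨m, hm, n, hn, rfl⟩
  exact h m hm n hn

theorem prod_mono_s5 {M N M' N' : Submodule F L} (hM : M ≤ M') (hN : N ≤ N') :
    A.prod M N ≤ A.prod M' N' :=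
  A.prod_le_iff_s5.2 fun _ hm _ hn => A.mem_prod_s5 (hM hm) (hN hn)

def rmul (x : L) : Module.End F L := A.bracket.flip x

@[simp] theorem rmul_apply (x y : L) : A.rmul x y = A.bracket y x := rfl

theorem rmul_bracket (x a b : L) :
    A.rmul x (A.bracket a b) = A.bracket (A.rmul x a) b + A.bracket a (A.rmul x b) := by
  simp only [rmul_apply]
  rw [A.leibniz a b x]
  abel

theorem isAbelian_iff : A.IsAbelian U ↔ ∀ a ∈ U, ∀ b ∈ U, A.bracket a b = 0 := by
  simp only [IsAbelian, ← le_bot_iff, prod_le_iff_s5, Submodule.mem_bot]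

theorem IsAbelian.mono {A : LeibnizAlg F L} (hW : A.IsAbelian W) (hUW : U ≤ W) :
    A.IsAbelian U :=
  le_bot_iff.1 (hW ▸ A.prod_mono_s5 hUW hUW)

theorem IsAbelian.isSubalgebra {A : LeibnizAlg F L} (hU : A.IsAbelian U) : A.IsSubalgebra U :=
  hU.le.trans bot_le

theorem isSubalgebra_of_prod_le (hW : A.prod U U ≤ W) (hWU : W ≤ U) : A.IsSubalgebra W :=
  (A.prod_mono_s5 hWU hWU).trans hW

theorem prod_prod_le (hU : A.IsSubalgebra U) : A.prod (A.prod U U) U ≤ A.prod U U := by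
  refine A.prod_le_iff_s5.2 fun w hw v hv => ?_
  suffices A.prod U U ≤ (A.prod U U).comap (A.rmul v) from this hw
  refine Submodule.span_le.2 ?_
  rintro _ ⟨a, ha, b, hb, rfl⟩
  show A.rmul v (A.bracket a b) ∈ A.prod U U
  rw [rmul_bracket]
  exact add_mem (A.mem_prod_s5 (hU (A.mem_prod_s5 ha hv)) hb) (A.mem_prod_s5 ha (hU (A.mem_prod_s5 hb hv)))

theorem isSubalgebra_derSeries (i : ℕ) : A.IsSubalgebra (A.derSeries i) := by
  induction i with
  | zero => exact le_top
  | succ i ih => exact A.prod_mono_s5 ih ih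

theorem eq_bot_of_prod_self_eq (hL : A.IsSolvable) (hU : A.prod U U = U) : U = ⊥ := by
  obtain ⟨k, hk⟩ := hL
  have : ∀ j, U ≤ A.derSeries j := fun j => by
    induction j with
    | zero => exact le_top
    | succ j ih => exact hU ▸ A.prod_mono_s5 ih ih
  exact le_bot_iff.1 (hk ▸ this k)

theorem lcs_succ_le_map_rmul_pow (hU : A.IsSubalgebra U) (hab : A.IsAbelian (A.prod U U))
    {z : L} (hzU : A.prod U U ⊔ Submodule.span F {z} = U) (k : ℕ) :
    A.lcs U (k + 1) ≤ A.prod U U ⊓ (A.prod U U).map (A.rmul z ^ k) := by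
  induction k with
  | zero => simp [lcs, Module.End.one_eq_id]
  | succ k ih =>
    refine (A.prod_mono_s5 ih le_rfl).trans (A.prod_le_iff_s5.2 ?_)
    rintro w ⟨hw, u, hu, rfl⟩ v hv
    refine ⟨A.prod_prod_le hU (A.mem_prod_s5 hw hv), ?_⟩
    rw [← hzU] at hv
    obtain ⟨v', hv', _, hc, rfl⟩ := Submodule.mem_sup.1 hv
    obtain ⟨c, rfl⟩ := Submodule.mem_span_singleton.1 hc
    rw [map_add, map_smul, (A.isAbelian_iff.1 hab) _ hw _ hv', zero_add]
    refine Submodule.smul_mem _ c ⟨u, hu, ?_⟩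
    rw [pow_succ', Module.End.mul_apply, rmul_apply]

variable [FiniteDimensional F L]

theorem isAbelian_of_forall_le_ker_rmul_pow (hA : A.IsAAlgebra) (hL : A.IsSolvable)
    (hU : A.IsSubalgebra U) (hnil : ∀ x ∈ U, ∃ N, U ≤ LinearMap.ker (A.rmul x ^ N)) :
    A.IsAbelian U := by
  induction hd : Module.finrank F U using Nat.strong_induction_on generalizing U with
  | _ d ih =>
  have hmid : ∀ W, A.prod U U ≤ W → W < U → A.IsAbelian W := fun W hUW hWU =>
    ih _ (hd ▸ Submodule.finrank_lt_finrank_of_lt hWU) (A.isSubalgebra_of_prod_le hUW hWU.le)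
      (fun x hx => (hnil x (hWU.le hx)).imp fun _ hN => hWU.le.trans hN) rfl
  by_cases hUU : A.prod U U = U
  · rw [IsAbelian, hUU, A.eq_bot_of_prod_self_eq hL hUU]
  have hlt : A.prod U U < U := lt_of_le_of_ne hU hUU
  have hspan : ∀ z ∈ U, A.prod U U ⊔ Submodule.span F {z} ≤ U := fun z hz =>
    sup_le hU ((Submodule.span_singleton_le_iff_mem z U).2 hz)
  by_cases hcod : ∃ z ∈ U, A.prod U U ⊔ Submodule.span F {z} = U
  · obtain ⟨z, hz, hzU⟩ := hcod
    obtain ⟨N, hN⟩ := hnil z hz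
    refine hA U hU ⟨N + 1, le_bot_iff.1 ?_⟩
    refine (A.lcs_succ_le_map_rmul_pow hU (hmid _ le_rfl hlt) hzU N).trans (inf_le_right.trans ?_)
    rintro _ ⟨u, hu, rfl⟩
    exact hN (hU hu)
  · push Not at hcod
    -- every `[U,U] + Fz` is a proper subalgebra, hence abelian, so `[[U,U], U] = 0`
    refine hA U hU ⟨2, le_bot_iff.1 (A.prod_le_iff_s5.2 fun w hw z hz => ?_)⟩
    have hab := hmid _ le_sup_left (lt_of_le_of_ne (hspan z hz) (hcod z hz))
    exact (Submodule.mem_bot F).2 (A.isAbelian_iff.1 hab _ (Submodule.mem_sup_left hw) _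
      (Submodule.mem_sup_right (Submodule.mem_span_singleton_self z)))

/-- `U₀` is the Fitting null component of `R_x` on `U`; the Fitting one component lies in
`[U, U]`. -/
theorem exists_lt_isSubalgebra_sup_prod_eq (hU : A.IsSubalgebra U) {x : L} (hx : x ∈ U)
    (hnx : ∀ N, ¬ U ≤ LinearMap.ker (A.rmul x ^ N)) :
    ∃ U₀ < U, A.IsSubalgebra U₀ ∧ U₀ ⊔ A.prod U U = U := by
  set f := A.rmul x
  have hfU : ∀ u ∈ U, f u ∈ A.prod U U := fun u hu => A.mem_prod_s5 hu hx
  have hUf : ∀ u ∈ U, f u ∈ U := fun u hu => hU (hfU u hu)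
  obtain ⟨N, hN⟩ := Filter.eventually_atTop.1 <| f.eventually_iSup_ker_pow_eq.and
    (f.restrict hUf).eventually_codisjoint_ker_pow_range_pow
  obtain ⟨hker, hcod⟩ := hN (N + 1) N.le_succ
  refine ⟨U ⊓ LinearMap.ker (f ^ (N + 1)),
    lt_of_le_of_ne inf_le_left fun h => hnx (N + 1) (h ▸ inf_le_right), ?_, ?_⟩
  · refine A.prod_le_iff_s5.2 fun a ha b hb => ⟨hU (A.mem_prod_s5 ha.1 hb.1), ?_⟩
    rw [← hker]
    exact Submodule.mem_iSup_of_mem _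
      (Module.End.pow_add_apply_eq_zero_of_derivation A.bracket (A.rmul_bracket x) ha.2 hb.2)
  · refine le_antisymm (sup_le inf_le_left hU) fun u hu => ?_
    obtain ⟨a, ha, _, ⟨c, rfl⟩, hac⟩ :=
      Submodule.mem_sup.1 (codisjoint_iff.1 hcod ▸ Submodule.mem_top : (⟨u, hu⟩ : U) ∈ _)
    rw [LinearMap.mem_ker, Module.End.pow_restrict] at ha
    rw [Module.End.pow_restrict] at hac
    have hau : (a : L) ∈ U ⊓ LinearMap.ker (f ^ (N + 1)) :=
      ⟨a.2, by simpa using congrArg Subtype.val ha⟩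
    have hcu : (f ^ (N + 1)) c ∈ A.prod U U := by
      rw [pow_succ', Module.End.mul_apply]
      exact hfU _ (Module.End.pow_apply_mem_of_forall_mem N hUf c c.2)
    have : u = a + (f ^ (N + 1)) c := by simpa using (congrArg Subtype.val hac).symm
    rw [this]
    exact Submodule.add_mem_sup hau hcu

theorem exists_isAbelian_sup_prod_eq (hA : A.IsAAlgebra) (hL : A.IsSolvable)
    (hU : A.IsSubalgebra U) : ∃ C ≤ U, A.IsAbelian C ∧ C ⊔ A.prod U U = U := by
  induction hd : Module.finrank F U using Nat.strong_induction_on generalizing U with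
  | _ d ih =>
  by_cases hnil : ∀ x ∈ U, ∃ N, U ≤ LinearMap.ker (A.rmul x ^ N)
  · exact ⟨U, le_rfl, A.isAbelian_of_forall_le_ker_rmul_pow hA hL hU hnil, sup_eq_left.2 hU⟩
  push Not at hnil
  obtain ⟨x, hx, hnx⟩ := hnil
  obtain ⟨U₀, hlt, hU₀, hsup⟩ := A.exists_lt_isSubalgebra_sup_prod_eq hU hx hnx
  obtain ⟨C, hC, hCab, hCsup⟩ := ih _ (hd ▸ Submodule.finrank_lt_finrank_of_lt hlt) hU₀ rfl
  refine ⟨C, hC.trans hlt.le, hCab, le_antisymm (sup_le (hC.trans hlt.le) hU) ?_⟩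
  calc U = C ⊔ A.prod U₀ U₀ ⊔ A.prod U U := by rw [hCsup, hsup]
    _ ≤ C ⊔ A.prod U U := sup_le (sup_le_sup_left (A.prod_mono_s5 hlt.le hlt.le) _) le_sup_right

theorem exists_isAbelian_complement_prod (hA : A.IsAAlgebra) (hL : A.IsSolvable)
    (hU : A.IsSubalgebra U) :
    ∃ B, A.IsAbelian B ∧ B ⊔ A.prod U U = U ∧ Disjoint B (A.prod U U) := by
  obtain ⟨C, -, hCab, hCsup⟩ := A.exists_isAbelian_sup_prod_eq hA hL hU
  set P := A.prod U U
  obtain ⟨B, hdisj, hB⟩ :=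
    IsModularLattice.exists_disjoint_and_sup_eq (inf_le_left : C ⊓ P ≤ C)
  have hBC : B ≤ C := hB ▸ le_sup_right
  refine ⟨B, hCab.mono hBC, ?_, ?_⟩
  · calc B ⊔ P = B ⊔ (C ⊓ P) ⊔ P := by
          rw [sup_assoc, sup_eq_right.2 (inf_le_right : C ⊓ P ≤ P)]
      _ = U := by rw [sup_comm B, hB, hCsup]
  · rw [disjoint_iff, ← inf_eq_left.2 hBC, inf_assoc, inf_comm]
    exact disjoint_iff.1 hdisj

end LeibnizAlg

theorem solvable_A_algebra_decomposition_general
    {F L : Type*} [Field F] [AddCommGroup L] [Module F L] [FiniteDimensional F L]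
    (A : LeibnizAlg F L) (hA : A.IsAAlgebra) (n : ℕ)
    (hlen : A.derSeries (n + 1) = ⊥) :
    ∃ Afam : Fin (n + 1) → Submodule F L,
      (∀ i, A.IsSubalgebra (Afam i)) ∧
      (∀ i, A.IsAbelian (Afam i)) ∧
      iSupIndep Afam ∧
      (⨆ i, Afam i) = ⊤ ∧
      (∀ i : Fin (n + 1),
        A.derSeries (i : ℕ) = ⨆ j : Fin (n + 1), ⨆ _ : i ≤ j, Afam j) := by
  choose B hBab hBsup hBdisj using fun i =>
    A.exists_isAbelian_complement_prod hA ⟨n + 1, hlen⟩ (A.isSubalgebra_derSeries i)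
  have hseries : ∀ i : Fin (n + 1), A.derSeries i = ⨆ j : Fin (n + 1), ⨆ _ : i ≤ j, B j :=
    eq_iSup_ge_of_sup_eq (D := A.derSeries) hBsup hlen
  refine ⟨fun j => B j, fun j => (hBab j).isSubalgebra, fun j => hBab j,
    (iSupIndep_of_sup_eq_of_disjoint (D := A.derSeries) hBsup hBdisj).comp Fin.val_injective, ?_,
    hseries⟩
  simpa [Fin.zero_le, LeibnizAlg.derSeries] using (hseries 0).symm

/-- A solvable Leibniz A-algebra of derived length `n+1` decomposes as
`L = A_n ∔ A_{n-1} ∔ … ∔ A_0` with each `A_i` an abelian subalgebra, and the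
decomposition can be chosen so that `L^(i) = A_n ∔ … ∔ A_i` for each `0 ≤ i ≤ n`. -/
theorem solvable_A_algebra_decomposition
    {F L : Type*} [Field F] [AddCommGroup L] [Module F L] [FiniteDimensional F L]
    (A : LeibnizAlg F L) (hA : A.IsAAlgebra) (n : ℕ)
    (hlen : A.derSeries (n + 1) = ⊥) (hlen' : A.derSeries n ≠ ⊥) :
    ∃ Afam : Fin (n + 1) → Submodule F L,
      (∀ i, A.IsSubalgebra (Afam i)) ∧
      (∀ i, A.IsAbelian (Afam i)) ∧
      iSupIndep Afam ∧
      (⨆ i, Afam i) = ⊤ ∧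
      (∀ i : Fin (n + 1),
        A.derSeries (i : ℕ) = ⨆ j : Fin (n + 1), ⨆ _ : i ≤ j, Afam j) :=
  solvable_A_algebra_decomposition_general A hA n hlen
end
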